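/- arXiv:2112.03614 — 3 statements merged into one kernel-verified Lean document; each statement's English description precedes it below -/
import Mathlib

section
/- Every parallel of a surface of osculating circles is a line of curvature: if γ(u) = X(s₀, u/r(s₀)) is a parallel parametrized by arc length, then (d/du)𝐍(γ(u)) = -(τ/√(r²τ² + r'²)) γ'(u), where all functions of s are evaluated at s₀. In particular the normal curvature along a parallel is the constant τ/√(r²τ² + r'²). -/
open Real

noncomputable section

/-- Euclidean dot product on ℝ³. -/
def dot3 (a b : Fin 3 → ℝ) : ℝ := a 0 * b 0 + a 1 * b 1 + a 2 * b 2

/-- Cross product on ℝ³. -/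
def cross3 (a b : Fin 3 → ℝ) : Fin 3 → ℝ :=
  ![a 1 * b 2 - a 2 * b 1, a 2 * b 0 - a 0 * b 2, a 0 * b 1 - a 1 * b 0]

/-- Euclidean norm on ℝ³. -/
def norm3 (a : Fin 3 → ℝ) : ℝ := Real.sqrt (dot3 a a)

/-- Scalar triple product: determinant of the three vectors. -/
def det3 (a b c : Fin 3 → ℝ) : ℝ := dot3 a (cross3 b c)

/-!
Along the parallel `s = s₀` both the surface point and the unit normal are affine images of the
rotating vector `sin(u/r) • T - cos(u/r) • N`: the point with factor `r`, the normal with factor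
`-rτ/√(r²τ²+r'²)`. Hence their `u`-derivatives are proportional, with ratio `-τ/√(r²τ²+r'²)`,
and since the parallel is parametrised by arc length the normal curvature is this ratio negated.
-/

open Matrix

section RotatingVector

variable {E : Type*} [NormedAddCommGroup E] [NormedSpace ℝ E]

theorem hasDerivAt_sin_smul_sub_cos_smul (e₁ e₂ : E) (ρ u : ℝ) :
    HasDerivAt (fun v => sin (v / ρ) • e₁ - cos (v / ρ) • e₂)
      (ρ⁻¹ • (cos (u / ρ) • e₁ + sin (u / ρ) • e₂)) u := by
  have hdiv : HasDerivAt (fun v : ℝ => v / ρ) ρ⁻¹ u := by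
    simpa using (hasDerivAt_id u).div_const ρ
  exact ((hdiv.sin.smul_const e₁).sub (hdiv.cos.smul_const e₂)).congr_deriv (by module)

theorem hasDerivAt_osculatingCircle (p e₁ e₂ : E) {ρ : ℝ} (hρ : ρ ≠ 0) (u : ℝ) :
    HasDerivAt (fun v => p + ρ • (sin (v / ρ) • e₁ + (1 - cos (v / ρ)) • e₂))
      (cos (u / ρ) • e₁ + sin (u / ρ) • e₂) u := by
  have h := ((hasDerivAt_sin_smul_sub_cos_smul e₁ e₂ ρ u).const_smul ρ).const_add (p + ρ • e₂)
  rw [smul_inv_smul₀ hρ] at h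
  convert h using 2 with v
  simp only [Pi.smul_apply]
  module

theorem hasDerivAt_osculatingCircle_normal (e₁ e₂ b : E) {ρ : ℝ} (hρ : ρ ≠ 0) (τ c u : ℝ) :
    HasDerivAt
      (fun v => c⁻¹ • ((-(ρ * τ * sin (v / ρ))) • e₁ + (ρ * τ * cos (v / ρ)) • e₂ + b))
      ((-(τ / c)) • (cos (u / ρ) • e₁ + sin (u / ρ) • e₂)) u := by
  have h := ((hasDerivAt_sin_smul_sub_cos_smul e₁ e₂ ρ u).const_smul (-(c⁻¹ * ρ * τ))).const_add
    (c⁻¹ • b)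
  convert h using 1
  · funext v
    simp only [Pi.smul_apply]
    module
  · rw [smul_smul]
    congr 1
    field_simp

end RotatingVector

theorem dot3_eq_dotProduct (a b : Fin 3 → ℝ) : dot3 a b = a ⬝ᵥ b := by
  simp only [dot3, dotProduct, Fin.sum_univ_three]

theorem dotProduct_cos_smul_add_sin_smul_self {n : Type*} [Fintype n] {e₁ e₂ : n → ℝ} (h₁ : e₁ ⬝ᵥ e₁ = 1)
    (h₂ : e₂ ⬝ᵥ e₂ = 1) (h₁₂ : e₁ ⬝ᵥ e₂ = 0) (θ : ℝ) :
    (cos θ • e₁ + sin θ • e₂) ⬝ᵥ (cos θ • e₁ + sin θ • e₂) = 1 := by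
  simp only [add_dotProduct, dotProduct_add, smul_dotProduct, dotProduct_smul, smul_eq_mul,
    h₁, h₂, h₁₂, dotProduct_comm e₂ e₁]
  linear_combination sin_sq_add_cos_sq θ

theorem stmt_6_general
    (α T N B : ℝ → Fin 3 → ℝ) (κ τ r r' : ℝ → ℝ)
    (hκ : ∀ s, 0 < κ s)
    (hr : ∀ s, r s = (κ s)⁻¹)
    -- Frenet frame and Frenet equations
    (hTT : ∀ s, dot3 (T s) (T s) = 1)
    (hNN : ∀ s, dot3 (N s) (N s) = 1)
    (hTN : ∀ s, dot3 (T s) (N s) = 0)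
    -- the surface of osculating circles and its partial derivatives
    (X : ℝ → ℝ → Fin 3 → ℝ)
    (hX : ∀ s u, X s u = α s + r s • (Real.sin u • T s + (1 - Real.cos u) • N s))
    (s₀ : ℝ)
    (γ γd 𝒩 : ℝ → Fin 3 → ℝ)
    (hγ : ∀ u, γ u = X s₀ (u / r s₀))
    (hγd : ∀ u, HasDerivAt γ (γd u) u)
    -- the surface unit normal along the parallel
    (h𝒩 : ∀ u, 𝒩 u =
      (Real.sqrt ((r s₀) ^ 2 * (τ s₀) ^ 2 + (r' s₀) ^ 2))⁻¹ •
        ((-(r s₀ * τ s₀ * Real.sin (u / r s₀))) • T s₀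
          + (r s₀ * τ s₀ * Real.cos (u / r s₀)) • N s₀ + r' s₀ • B s₀)) :
    ∀ u,
      HasDerivAt 𝒩
        ((-(τ s₀ / Real.sqrt ((r s₀) ^ 2 * (τ s₀) ^ 2 + (r' s₀) ^ 2))) • γd u) u
      ∧ -dot3 ((-(τ s₀ / Real.sqrt ((r s₀) ^ 2 * (τ s₀) ^ 2 + (r' s₀) ^ 2))) • γd u)
            (γd u)
          = τ s₀ / Real.sqrt ((r s₀) ^ 2 * (τ s₀) ^ 2 + (r' s₀) ^ 2) := by
  intro u
  have hr₀ : r s₀ ≠ 0 := by simpa [hr] using (hκ s₀).ne'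
  have hγd_eq : γd u = cos (u / r s₀) • T s₀ + sin (u / r s₀) • N s₀ := by
    have hγ_eq : γ = fun v => α s₀ + r s₀ • (sin (v / r s₀) • T s₀ + (1 - cos (v / r s₀)) • N s₀) :=
      funext fun v => (hγ v).trans (hX _ _)
    exact (hγd u).unique (hγ_eq ▸ hasDerivAt_osculatingCircle _ _ _ hr₀ u)
  have hunit : dot3 (γd u) (γd u) = 1 := by
    simp only [dot3_eq_dotProduct] at hTT hNN hTN ⊢
    rw [hγd_eq]
    exact dotProduct_cos_smul_add_sin_smul_self (hTT s₀) (hNN s₀) (hTN s₀) _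
  refine ⟨?_, ?_⟩
  · rw [funext h𝒩, hγd_eq]
    exact hasDerivAt_osculatingCircle_normal _ _ _ hr₀ _ _ u
  · rw [dot3_eq_dotProduct, smul_dotProduct, ← dot3_eq_dotProduct, hunit, smul_eq_mul, mul_one,
      neg_neg]

/-- Parallels are lines of curvature: along the arc-length parametrized
parallel `γ(u) = X(s₀, u/r(s₀))` the derivative of the surface unit normal is
`-(τ/√(r²τ²+r'²)) γ'(u)`; in particular the normal curvature is the constant
`τ/√(r²τ²+r'²)` along the parallel. -/
theorem stmt_6
    (α T N B : ℝ → Fin 3 → ℝ) (κ τ r r' : ℝ → ℝ)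
    (hκ : ∀ s, 0 < κ s)
    (hr : ∀ s, r s = (κ s)⁻¹)
    -- Frenet frame and Frenet equations
    (hTT : ∀ s, dot3 (T s) (T s) = 1)
    (hNN : ∀ s, dot3 (N s) (N s) = 1)
    (hTN : ∀ s, dot3 (T s) (N s) = 0)
    (hB : ∀ s, B s = cross3 (T s) (N s))
    (hα : ∀ s, HasDerivAt α (T s) s)
    (hT : ∀ s, HasDerivAt T (κ s • N s) s)
    (hN : ∀ s, HasDerivAt N ((-κ s) • T s + τ s • B s) s)
    (hB' : ∀ s, HasDerivAt B ((-τ s) • N s) s)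
    (hr' : ∀ s, HasDerivAt r (r' s) s)
    -- the surface of osculating circles and its partial derivatives
    (X Xs Xu : ℝ → ℝ → Fin 3 → ℝ)
    (hX : ∀ s u, X s u = α s + r s • (Real.sin u • T s + (1 - Real.cos u) • N s))
    (hXs : ∀ s u, HasDerivAt (fun t => X t u) (Xs s u) s)
    (hXu : ∀ s u, HasDerivAt (fun w => X s w) (Xu s u) u)
    (s₀ : ℝ) (hreg : ¬(r' s₀ = 0 ∧ τ s₀ = 0))
    (γ γd 𝒩 : ℝ → Fin 3 → ℝ)
    (hγ : ∀ u, γ u = X s₀ (u / r s₀))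
    (hγd : ∀ u, HasDerivAt γ (γd u) u)
    -- the surface unit normal along the parallel
    (h𝒩 : ∀ u, 𝒩 u =
      (Real.sqrt ((r s₀) ^ 2 * (τ s₀) ^ 2 + (r' s₀) ^ 2))⁻¹ •
        ((-(r s₀ * τ s₀ * Real.sin (u / r s₀))) • T s₀
          + (r s₀ * τ s₀ * Real.cos (u / r s₀)) • N s₀ + r' s₀ • B s₀)) :
    ∀ u,
      HasDerivAt 𝒩
        ((-(τ s₀ / Real.sqrt ((r s₀) ^ 2 * (τ s₀) ^ 2 + (r' s₀) ^ 2))) • γd u) u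
      ∧ -dot3 ((-(τ s₀ / Real.sqrt ((r s₀) ^ 2 * (τ s₀) ^ 2 + (r' s₀) ^ 2))) • γd u)
            (γd u)
          = τ s₀ / Real.sqrt ((r s₀) ^ 2 * (τ s₀) ^ 2 + (r' s₀) ^ 2) :=
  stmt_6_general α T N B κ τ r r' hκ hr hTT hNN hTN X hX s₀ γ γd 𝒩 hγ hγd h𝒩
end
end

section
/- For the surface of osculating circles X(s,u), one has det(X_s, X_u, X_uu) = r³τ(1 - cos u) and det(X_s, X_u, X_su) = 2r²τ(1 + r' sin u) sin²(u/2). -/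
/-!
Everything is computed in the Frenet frame `(T, N, B)`. The `u`-derivatives `X_u`, `X_uu` are
`r` times unit vectors rotating in the osculating plane. In `X_s` the `T`-terms of `α' = T` and
`r • N' = r • (-κ T + τ B)` cancel because `r κ = 1`, leaving a binormal component
`r τ (1 - cos u)`, whose `u`-derivative `r τ sin u` is the binormal component of `X_su`.
As `(T, N, B)` is orthonormal and positively oriented, each determinant is the determinant of
the coefficient matrix, and the half-angle formula `1 - cos u = 2 sin² (u/2)` gives the second form.
-/

open Real

noncomputable section

lemma det3_smul_add_smul_add_smul (t n b : Fin 3 → ℝ) (a₁ a₂ a₃ b₁ b₂ b₃ c₁ c₂ c₃ : ℝ) :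
    det3 (a₁ • t + a₂ • n + a₃ • b) (b₁ • t + b₂ • n + b₃ • b) (c₁ • t + c₂ • n + c₃ • b)
      = !![a₁, a₂, a₃; b₁, b₂, b₃; c₁, c₂, c₃].det * det3 t n b := by
  simp only [det3, dot3, cross3, Pi.add_apply, Pi.smul_apply, smul_eq_mul,
    Matrix.det_fin_three, Matrix.of_apply, Matrix.cons_val', Matrix.cons_val_zero,
    Matrix.cons_val_one, Matrix.cons_val, Matrix.cons_val_fin_one]
  ring

lemma det3_self_cross (a b : Fin 3 → ℝ) :
    det3 a b (cross3 a b) = dot3 a a * dot3 b b - dot3 a b ^ 2 := by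
  simp only [det3, dot3, cross3, Matrix.cons_val_zero, Matrix.cons_val_one,
    Matrix.cons_val_two, Matrix.head_cons, Matrix.tail_cons]
  ring

section OrthonormalFrame

variable {t n : Fin 3 → ℝ} (htt : dot3 t t = 1) (hnn : dot3 n n = 1) (htn : dot3 t n = 0)
include htt hnn htn

lemma det3_smul_add_smul_add_smul_cross3 (a₁ a₂ a₃ b₁ b₂ b₃ c₁ c₂ c₃ : ℝ) :
    det3 (a₁ • t + a₂ • n + a₃ • cross3 t n) (b₁ • t + b₂ • n + b₃ • cross3 t n)
        (c₁ • t + c₂ • n + c₃ • cross3 t n)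
      = !![a₁, a₂, a₃; b₁, b₂, b₃; c₁, c₂, c₃].det := by
  rw [det3_smul_add_smul_add_smul, det3_self_cross, htt, hnn, htn]
  ring

lemma det3_osculatingSurface_angle_angle (ρ ρ' τ u : ℝ) :
    det3 ((cos u + ρ' * sin u) • t + (sin u + ρ' * (1 - cos u)) • n
        + (ρ * τ * (1 - cos u)) • cross3 t n)
      ((ρ * cos u) • t + (ρ * sin u) • n + (0 : ℝ) • cross3 t n)
      ((-(ρ * sin u)) • t + (ρ * cos u) • n + (0 : ℝ) • cross3 t n)
      = ρ ^ 3 * τ * (1 - cos u) := by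
  rw [det3_smul_add_smul_add_smul_cross3 htt hnn htn, Matrix.det_fin_three]
  simp only [Matrix.of_apply, Matrix.cons_val', Matrix.cons_val_zero, Matrix.cons_val_one,
    Matrix.cons_val_two, Matrix.tail_cons, Matrix.empty_val', Matrix.cons_val_fin_one,
    Matrix.vecHead]
  linear_combination (ρ ^ 3 * τ * (1 - cos u)) * sin_sq_add_cos_sq u

lemma det3_osculatingSurface_arclength_angle (ρ ρ' τ u : ℝ) :
    det3 ((cos u + ρ' * sin u) • t + (sin u + ρ' * (1 - cos u)) • n
        + (ρ * τ * (1 - cos u)) • cross3 t n)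
      ((ρ * cos u) • t + (ρ * sin u) • n + (0 : ℝ) • cross3 t n)
      ((-sin u + ρ' * cos u) • t + (cos u + ρ' * sin u) • n + (ρ * τ * sin u) • cross3 t n)
      = 2 * ρ ^ 2 * τ * (1 + ρ' * sin u) * sin (u / 2) ^ 2 := by
  have half_angle : 2 * sin (u / 2) ^ 2 = 1 - cos u := by
    rw [sin_sq_eq_half_sub, mul_div_cancel₀ u two_ne_zero]
    ring
  rw [det3_smul_add_smul_add_smul_cross3 htt hnn htn, Matrix.det_fin_three]
  simp only [Matrix.of_apply, Matrix.cons_val', Matrix.cons_val_zero, Matrix.cons_val_one,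
    Matrix.cons_val_two, Matrix.tail_cons, Matrix.empty_val', Matrix.cons_val_fin_one,
    Matrix.vecHead]
  linear_combination (ρ ^ 2 * τ * (ρ' * sin u + 1 - cos u)) * sin_sq_add_cos_sq u
    - (ρ ^ 2 * τ * (1 + ρ' * sin u)) * half_angle

end OrthonormalFrame

section Derivatives

variable {E : Type*} [NormedAddCommGroup E] [NormedSpace ℝ E]

lemma hasDerivAt_one_sub_cos (u : ℝ) : HasDerivAt (fun w => 1 - cos w) (sin u) u := by
  simpa using (hasDerivAt_cos u).const_sub 1

lemma hasDerivAt_osculatingSurface_angle (a t n : E) (ρ u : ℝ) :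
    HasDerivAt (fun w => a + ρ • (sin w • t + (1 - cos w) • n))
      ((ρ * cos u) • t + (ρ * sin u) • n) u :=
  ((((hasDerivAt_sin u).smul_const t).add ((hasDerivAt_one_sub_cos u).smul_const n)).const_smul ρ
    |>.const_add a).congr_deriv (by module)

lemma hasDerivAt_osculatingSurface_angle_angle (t n : E) (ρ u : ℝ) :
    HasDerivAt (fun w => (ρ * cos w) • t + (ρ * sin w) • n)
      ((-(ρ * sin u)) • t + (ρ * cos u) • n) u :=
  ((((hasDerivAt_cos u).const_mul ρ).smul_const t).add
    (((hasDerivAt_sin u).const_mul ρ).smul_const n)).congr_deriv (by module)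

lemma hasDerivAt_osculatingSurface_arclength {α T N : ℝ → E} {r : ℝ → ℝ} {s k τ ρ' : ℝ} {b : E}
    (hα : HasDerivAt α (T s) s) (hT : HasDerivAt T (k • N s) s)
    (hN : HasDerivAt N ((-k) • T s + τ • b) s) (hr : HasDerivAt r ρ' s) (hrk : r s * k = 1)
    (u : ℝ) :
    HasDerivAt (fun t => α t + r t • (sin u • T t + (1 - cos u) • N t))
      ((cos u + ρ' * sin u) • T s + (sin u + ρ' * (1 - cos u)) • N s
        + (r s * τ * (1 - cos u)) • b) s :=
  (hα.add (hr.smul ((hT.const_smul (sin u)).add (hN.const_smul (1 - cos u))))).congr_deriv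
    (by
      simp only [Pi.add_apply, Pi.smul_apply]
      linear_combination (norm := module) hrk • (sin u • N s - (1 - cos u) • T s))

lemma hasDerivAt_osculatingSurface_arclength_angle (t n b : E) (p q u : ℝ) :
    HasDerivAt (fun w => (cos w + p * sin w) • t + (sin w + p * (1 - cos w)) • n
        + (q * (1 - cos w)) • b)
      ((-sin u + p * cos u) • t + (cos u + p * sin u) • n + (q * sin u) • b) u :=
  (((((hasDerivAt_cos u).add ((hasDerivAt_sin u).const_mul p)).smul_const t).add
    (((hasDerivAt_sin u).add ((hasDerivAt_one_sub_cos u).const_mul p)).smul_const n)).add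
    (((hasDerivAt_one_sub_cos u).const_mul q).smul_const b))

end Derivatives

theorem stmt_9_general
    (α T N B : ℝ → Fin 3 → ℝ) (κ τ r r' : ℝ → ℝ)
    (hκ : ∀ s, 0 < κ s)
    (hr : ∀ s, r s = (κ s)⁻¹)
    -- Frenet frame and Frenet equations
    (hTT : ∀ s, dot3 (T s) (T s) = 1)
    (hNN : ∀ s, dot3 (N s) (N s) = 1)
    (hTN : ∀ s, dot3 (T s) (N s) = 0)
    (hB : ∀ s, B s = cross3 (T s) (N s))
    (hα : ∀ s, HasDerivAt α (T s) s)
    (hT : ∀ s, HasDerivAt T (κ s • N s) s)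
    (hN : ∀ s, HasDerivAt N ((-κ s) • T s + τ s • B s) s)
    (hr' : ∀ s, HasDerivAt r (r' s) s)
    -- the surface of osculating circles and its partial derivatives
    (X Xs Xu : ℝ → ℝ → Fin 3 → ℝ)
    (hX : ∀ s u, X s u = α s + r s • (Real.sin u • T s + (1 - Real.cos u) • N s))
    (hXs : ∀ s u, HasDerivAt (fun t => X t u) (Xs s u) s)
    (hXu : ∀ s u, HasDerivAt (fun w => X s w) (Xu s u) u)
    (Xuu Xsu : ℝ → ℝ → Fin 3 → ℝ)
    (hXuu : ∀ s u, HasDerivAt (fun w => Xu s w) (Xuu s u) u)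
    (hXsu : ∀ s u, HasDerivAt (fun w => Xs s w) (Xsu s u) u) :
    ∀ s u,
      det3 (Xs s u) (Xu s u) (Xuu s u) = (r s) ^ 3 * τ s * (1 - Real.cos u)
      ∧ det3 (Xs s u) (Xu s u) (Xsu s u)
          = 2 * (r s) ^ 2 * τ s * (1 + r' s * Real.sin u) * Real.sin (u / 2) ^ 2 := by
  intro s u
  have hrκ : r s * κ s = 1 := by rw [hr]; exact inv_mul_cancel₀ (hκ s).ne'
  have Xs_eq : ∀ w, Xs s w = (cos w + r' s * sin w) • T s
      + (sin w + r' s * (1 - cos w)) • N s + (r s * τ s * (1 - cos w)) • B s := fun w =>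
    (hXs s w).unique <| by
      simpa only [hX] using
        hasDerivAt_osculatingSurface_arclength (hα s) (hT s) (hN s) (hr' s) hrκ w
  have Xu_eq : ∀ w, Xu s w = (r s * cos w) • T s + (r s * sin w) • N s + (0 : ℝ) • B s :=
    fun w => by
      rw [zero_smul, add_zero]
      exact (hXu s w).unique <| by
        simpa only [hX] using hasDerivAt_osculatingSurface_angle (α s) (T s) (N s) (r s) w
  have Xuu_eq : Xuu s u = (-(r s * sin u)) • T s + (r s * cos u) • N s + (0 : ℝ) • B s := by
    rw [zero_smul, add_zero]
    exact (hXuu s u).unique <| by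
      simpa only [Xu_eq, zero_smul, add_zero] using
        hasDerivAt_osculatingSurface_angle_angle (T s) (N s) (r s) u
  have Xsu_eq : Xsu s u = (-sin u + r' s * cos u) • T s + (cos u + r' s * sin u) • N s
      + (r s * τ s * sin u) • B s :=
    (hXsu s u).unique <| by
      simpa only [Xs_eq] using
        hasDerivAt_osculatingSurface_arclength_angle (T s) (N s) (B s) (r' s) (r s * τ s) u
  rw [Xs_eq, Xu_eq, Xuu_eq, Xsu_eq, hB]
  exact ⟨det3_osculatingSurface_angle_angle (hTT s) (hNN s) (hTN s) _ _ _ _,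
    det3_osculatingSurface_arclength_angle (hTT s) (hNN s) (hTN s) _ _ _ _⟩

/-- Triple-product (determinant) identities for the surface of
osculating circles: `det(X_s, X_u, X_uu)` and `det(X_s, X_u, X_su)`. -/
theorem stmt_9
    (α T N B : ℝ → Fin 3 → ℝ) (κ τ r r' : ℝ → ℝ)
    (hκ : ∀ s, 0 < κ s)
    (hr : ∀ s, r s = (κ s)⁻¹)
    -- Frenet frame and Frenet equations
    (hTT : ∀ s, dot3 (T s) (T s) = 1)
    (hNN : ∀ s, dot3 (N s) (N s) = 1)
    (hTN : ∀ s, dot3 (T s) (N s) = 0)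
    (hB : ∀ s, B s = cross3 (T s) (N s))
    (hα : ∀ s, HasDerivAt α (T s) s)
    (hT : ∀ s, HasDerivAt T (κ s • N s) s)
    (hN : ∀ s, HasDerivAt N ((-κ s) • T s + τ s • B s) s)
    (hB' : ∀ s, HasDerivAt B ((-τ s) • N s) s)
    (hr' : ∀ s, HasDerivAt r (r' s) s)
    -- the surface of osculating circles and its partial derivatives
    (X Xs Xu : ℝ → ℝ → Fin 3 → ℝ)
    (hX : ∀ s u, X s u = α s + r s • (Real.sin u • T s + (1 - Real.cos u) • N s))
    (hXs : ∀ s u, HasDerivAt (fun t => X t u) (Xs s u) s)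
    (hXu : ∀ s u, HasDerivAt (fun w => X s w) (Xu s u) u)
    (Xuu Xsu : ℝ → ℝ → Fin 3 → ℝ)
    (hXuu : ∀ s u, HasDerivAt (fun w => Xu s w) (Xuu s u) u)
    (hXsu : ∀ s u, HasDerivAt (fun w => Xs s w) (Xsu s u) u) :
    ∀ s u,
      det3 (Xs s u) (Xu s u) (Xuu s u) = (r s) ^ 3 * τ s * (1 - Real.cos u)
      ∧ det3 (Xs s u) (Xu s u) (Xsu s u)
          = 2 * (r s) ^ 2 * τ s * (1 + r' s * Real.sin u) * Real.sin (u / 2) ^ 2 :=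
  stmt_9_general α T N B κ τ r r' hκ hr hTT hNN hTN hB hα hT hN hr' X Xs Xu hX hXs hXu Xuu Xsu hXuu
    hXsu
end
end

section
/- Let α be a unit-speed curve with τ ≠ 0 and κ' ≠ 0 everywhere, radius of curvature r = 1/κ. Then α is contained in a sphere of radius R if and only if r² + r'²/τ² = R² (constant); moreover this condition implies the identity r''τ - r'τ' + rτ³ = 0. -/
open Real

noncomputable section

/-!
If `α` lies on the sphere `|α - c| = R`, differentiating `|α - c|² = R²` three times along the
Frenet frame gives the coordinates `T·(α - c) = 0`, `N·(α - c) = -r`, `B·(α - c) = -r'/τ`, so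
`R² = r² + (r'/τ)²`. Differentiating this relation gives `r''τ - r'τ' + rτ³ = 0` (after
cancelling `r' = -κ'/κ² ≠ 0`), i.e. `(r'/τ)' = -rτ`. Conversely, this last identity is exactly
what makes the centre of the osculating sphere `α + r N + (r'/τ) B` constant, and its distance
to `α` is `√(r² + (r'/τ)²) = R`.
-/

lemma dot3_comm (a b : Fin 3 → ℝ) : dot3 a b = dot3 b a := by
  simp only [dot3]; ring

lemma dot3_add_left (a a' b : Fin 3 → ℝ) : dot3 (a + a') b = dot3 a b + dot3 a' b := by
  simp only [dot3, Pi.add_apply]; ring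

lemma dot3_smul_left (c : ℝ) (a b : Fin 3 → ℝ) : dot3 (c • a) b = c * dot3 a b := by
  simp only [dot3, Pi.smul_apply, smul_eq_mul]; ring

lemma dot3_neg_neg (a b : Fin 3 → ℝ) : dot3 (-a) (-b) = dot3 a b := by
  simp only [dot3, Pi.neg_apply]; ring

lemma dot3_smul_add_smul_self (p q : ℝ) (x y : Fin 3 → ℝ) :
    dot3 (p • x + q • y) (p • x + q • y) =
      p ^ 2 * dot3 x x + 2 * p * q * dot3 x y + q ^ 2 * dot3 y y := by
  simp only [dot3, Pi.add_apply, Pi.smul_apply, smul_eq_mul]; ring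

lemma dot3_cross3_right (a b : Fin 3 → ℝ) : dot3 b (cross3 a b) = 0 := by
  simp [dot3, cross3]; ring

lemma dot3_cross3_self (a b : Fin 3 → ℝ) :
    dot3 (cross3 a b) (cross3 a b) = dot3 a a * dot3 b b - dot3 a b ^ 2 := by
  simp [dot3, cross3]; ring

lemma dot3_self_eq_of_orthonormal {a b : Fin 3 → ℝ} (ha : dot3 a a = 1) (hb : dot3 b b = 1)
    (hab : dot3 a b = 0) (v : Fin 3 → ℝ) :
    dot3 v v = dot3 a v ^ 2 + dot3 b v ^ 2 + dot3 (cross3 a b) v ^ 2 := by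
  simp only [dot3, cross3, Matrix.cons_val_zero, Matrix.cons_val_one, Matrix.cons_val_two,
    Matrix.head_cons, Matrix.tail_cons] at *
  linear_combination
    ((b 0 * v 0 + b 1 * v 1 + b 2 * v 2) ^ 2
      - (v 0 * v 0 + v 1 * v 1 + v 2 * v 2) * (b 0 * b 0 + b 1 * b 1 + b 2 * b 2)) * ha
    + ((a 0 * v 0 + a 1 * v 1 + a 2 * v 2) ^ 2 - (v 0 * v 0 + v 1 * v 1 + v 2 * v 2)) * hb
    + ((v 0 * v 0 + v 1 * v 1 + v 2 * v 2) * (a 0 * b 0 + a 1 * b 1 + a 2 * b 2)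
      - 2 * (a 0 * v 0 + a 1 * v 1 + a 2 * v 2) * (b 0 * v 0 + b 1 * v 1 + b 2 * v 2)) * hab

lemma HasDerivAt.dot3 {u v : ℝ → Fin 3 → ℝ} {u' v' : Fin 3 → ℝ} {s : ℝ}
    (hu : HasDerivAt u u' s) (hv : HasDerivAt v v' s) :
    HasDerivAt (fun t => dot3 (u t) (v t)) (dot3 u' (v s) + dot3 (u s) v') s := by
  have hu' := hasDerivAt_pi.mp hu
  have hv' := hasDerivAt_pi.mp hv
  refine ((((hu' 0).mul (hv' 0)).add ((hu' 1).mul (hv' 1))).add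
    ((hu' 2).mul (hv' 2))).congr_deriv ?_
  unfold _root_.dot3; ring

lemma HasDerivAt.eq_zero_of_forall_eq {𝕜 F : Type*} [NontriviallyNormedField 𝕜]
    [NormedAddCommGroup F] [NormedSpace 𝕜 F] {f : 𝕜 → F} {f' C : F} {s : 𝕜}
    (hf : HasDerivAt f f' s) (hC : ∀ t, f t = C) : f' = 0 := by
  rw [show f = fun _ => C from funext hC] at hf
  exact hf.unique (hasDerivAt_const s C)

section SphericalCurve

variable {α T N B : ℝ → Fin 3 → ℝ} {κ τ r r' : ℝ → ℝ} {c : Fin 3 → ℝ}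

lemma dot3_tangent_sub_eq_zero_of_sphere {ρ : ℝ} (hα : ∀ s, HasDerivAt α (T s) s)
    (hc : ∀ s, dot3 (α s - c) (α s - c) = ρ) (s : ℝ) : dot3 (T s) (α s - c) = 0 := by
  have h := (((hα s).sub_const c).dot3 ((hα s).sub_const c)).eq_zero_of_forall_eq hc
  rw [dot3_comm (α s - c)] at h
  linarith

lemma dot3_normal_sub_eq_neg_of_sphere (hα : ∀ s, HasDerivAt α (T s) s)
    (hT : ∀ s, HasDerivAt T (κ s • N s) s) (hTT : ∀ s, dot3 (T s) (T s) = 1)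
    (hκ : ∀ s, κ s ≠ 0) (hr : ∀ s, r s = (κ s)⁻¹)
    (hTc : ∀ s, dot3 (T s) (α s - c) = 0) (s : ℝ) : dot3 (N s) (α s - c) = -r s := by
  have h := ((hT s).dot3 ((hα s).sub_const c)).eq_zero_of_forall_eq hTc
  rw [dot3_smul_left, hTT s] at h
  rw [hr s, eq_neg_iff_add_eq_zero, ← mul_right_inj' (hκ s), mul_add, mul_inv_cancel₀ (hκ s)]
  linear_combination h

lemma mul_dot3_binormal_sub_eq_neg_of_sphere (hα : ∀ s, HasDerivAt α (T s) s)
    (hN : ∀ s, HasDerivAt N ((-κ s) • T s + τ s • B s) s) (hTN : ∀ s, dot3 (T s) (N s) = 0)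
    (hr' : ∀ s, HasDerivAt r (r' s) s) (hTc : ∀ s, dot3 (T s) (α s - c) = 0)
    (hNc : ∀ s, dot3 (N s) (α s - c) = -r s) (s : ℝ) :
    τ s * dot3 (B s) (α s - c) = -r' s := by
  have h := (((hN s).dot3 ((hα s).sub_const c)).add (hr' s)).eq_zero_of_forall_eq
    (C := 0) fun t => by simp only [Pi.add_apply, hNc, neg_add_cancel]
  rw [dot3_add_left, dot3_smul_left, dot3_smul_left, hTc s, dot3_comm (N s), hTN s] at h
  linarith

theorem sq_add_sq_div_sq_eq_of_sphere {R : ℝ} (hα : ∀ s, HasDerivAt α (T s) s)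
    (hT : ∀ s, HasDerivAt T (κ s • N s) s)
    (hN : ∀ s, HasDerivAt N ((-κ s) • T s + τ s • B s) s)
    (hTT : ∀ s, dot3 (T s) (T s) = 1) (hNN : ∀ s, dot3 (N s) (N s) = 1)
    (hTN : ∀ s, dot3 (T s) (N s) = 0) (hB : ∀ s, B s = cross3 (T s) (N s))
    (hκ : ∀ s, κ s ≠ 0) (hr : ∀ s, r s = (κ s)⁻¹) (hr' : ∀ s, HasDerivAt r (r' s) s)
    (hτ : ∀ s, τ s ≠ 0) (hc : ∀ s, dot3 (α s - c) (α s - c) = R ^ 2) (s : ℝ) :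
    r s ^ 2 + r' s ^ 2 / τ s ^ 2 = R ^ 2 := by
  have hTc := dot3_tangent_sub_eq_zero_of_sphere hα hc
  have hNc := dot3_normal_sub_eq_neg_of_sphere hα hT hTT hκ hr hTc
  have hBc : dot3 (B s) (α s - c) = -r' s / τ s := by
    rw [eq_div_iff (hτ s), mul_comm]
    exact mul_dot3_binormal_sub_eq_neg_of_sphere hα hN hTN hr' hTc hNc s
  rw [← hc s, dot3_self_eq_of_orthonormal (hTT s) (hNN s) (hTN s), ← hB s, hTc s, hNc s, hBc]
  field_simp [hτ s]
  ring

end SphericalCurve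

theorem radius_identity_of_sq_add_sq_div_sq_eq {r r' r'' τ τ' : ℝ → ℝ} {C s : ℝ}
    (hr : HasDerivAt r (r' s) s) (hr' : HasDerivAt r' (r'' s) s) (hτ : HasDerivAt τ (τ' s) s)
    (hτ0 : τ s ≠ 0) (hr'0 : r' s ≠ 0) (h : ∀ t, r t ^ 2 + r' t ^ 2 / τ t ^ 2 = C) :
    r'' s * τ s - r' s * τ' s + r s * τ s ^ 3 = 0 := by
  have h0 := ((hr.pow 2).add ((hr'.div hτ hτ0).pow 2)).eq_zero_of_forall_eq
    (C := C) fun t => by simp only [Pi.add_apply, Pi.pow_apply, Pi.div_apply, div_pow, h t]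
  have hfactor : 2 * r' s / τ s ^ 3 * (r'' s * τ s - r' s * τ' s + r s * τ s ^ 3) = 0 := by
    rw [← h0]
    simp only [Pi.div_apply, Nat.add_one_sub_one, pow_one]
    field_simp
    ring
  simpa [hr'0, hτ0] using hfactor

def osculatingSphereCenter (α N B : ℝ → Fin 3 → ℝ) (r r' τ : ℝ → ℝ) (s : ℝ) : Fin 3 → ℝ :=
  α s + r s • N s + (r' s / τ s) • B s

section OsculatingSphere

variable {α T N B : ℝ → Fin 3 → ℝ} {κ τ τ' r r' r'' : ℝ → ℝ}

lemma hasDerivAt_osculatingSphereCenter {s : ℝ} (hα : HasDerivAt α (T s) s)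
    (hN : HasDerivAt N ((-κ s) • T s + τ s • B s) s) (hB' : HasDerivAt B ((-τ s) • N s) s)
    (hr' : HasDerivAt r (r' s) s) (hr'' : HasDerivAt r' (r'' s) s)
    (hτ' : HasDerivAt τ (τ' s) s) (hτ0 : τ s ≠ 0) (hκ : κ s ≠ 0) (hr : r s = (κ s)⁻¹)
    (hid : r'' s * τ s - r' s * τ' s + r s * τ s ^ 3 = 0) :
    HasDerivAt (osculatingSphereCenter α N B r r' τ) 0 s := by
  have hq : HasDerivAt (fun t => r' t / τ t) (-(r s * τ s)) s := by
    refine (hr''.div hτ' hτ0).congr_deriv ?_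
    rw [div_eq_iff (pow_ne_zero 2 hτ0)]
    linear_combination hid
  have hrκ : r s * κ s = 1 := by rw [hr, inv_mul_cancel₀ hκ]
  have hqτ : r' s / τ s * τ s = r' s := div_mul_cancel₀ _ hτ0
  refine ((hα.add (hr'.smul hN)).add (hq.smul hB')).congr_deriv ?_
  linear_combination (norm := module) -hrκ • T s - hqτ • N s

theorem sphere_of_sq_add_sq_div_sq_eq {R : ℝ} (hα : ∀ s, HasDerivAt α (T s) s)
    (hN : ∀ s, HasDerivAt N ((-κ s) • T s + τ s • B s) s)
    (hB' : ∀ s, HasDerivAt B ((-τ s) • N s) s)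
    (hTT : ∀ s, dot3 (T s) (T s) = 1) (hNN : ∀ s, dot3 (N s) (N s) = 1)
    (hTN : ∀ s, dot3 (T s) (N s) = 0) (hB : ∀ s, B s = cross3 (T s) (N s))
    (hκ : ∀ s, κ s ≠ 0) (hr : ∀ s, r s = (κ s)⁻¹) (hr' : ∀ s, HasDerivAt r (r' s) s)
    (hr'' : ∀ s, HasDerivAt r' (r'' s) s) (hτ' : ∀ s, HasDerivAt τ (τ' s) s)
    (hτ0 : ∀ s, τ s ≠ 0) (hid : ∀ s, r'' s * τ s - r' s * τ' s + r s * τ s ^ 3 = 0)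
    (hR : ∀ s, r s ^ 2 + r' s ^ 2 / τ s ^ 2 = R ^ 2) :
    ∃ c : Fin 3 → ℝ, ∀ s, dot3 (α s - c) (α s - c) = R ^ 2 := by
  set c := osculatingSphereCenter α N B r r' τ with hc
  have hc' : ∀ s, HasDerivAt c 0 s := fun s =>
    hasDerivAt_osculatingSphereCenter (hα s) (hN s) (hB' s) (hr' s) (hr'' s) (hτ' s) (hτ0 s)
      (hκ s) (hr s) (hid s)
  have hconst : ∀ s, c s = c 0 := fun s =>
    is_const_of_deriv_eq_zero (fun t => (hc' t).differentiableAt) (fun t => (hc' t).deriv) s 0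
  refine ⟨c 0, fun s => ?_⟩
  have hBB : dot3 (B s) (B s) = 1 := by
    rw [hB s, dot3_cross3_self, hTT s, hNN s, hTN s]; norm_num
  have hNB : dot3 (N s) (B s) = 0 := by
    rw [hB s]; exact dot3_cross3_right _ _
  have hαc : α s - c s = -(r s • N s + (r' s / τ s) • B s) := by
    rw [hc, osculatingSphereCenter]; abel
  rw [← hconst s, hαc, dot3_neg_neg, dot3_smul_add_smul_self, hNN s, hNB, hBB, ← hR s]
  ring

end OsculatingSphere

theorem stmt_13_general
    (α T N B : ℝ → Fin 3 → ℝ) (κ τ r r' : ℝ → ℝ)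
    (hκ : ∀ s, 0 < κ s)
    (hr : ∀ s, r s = (κ s)⁻¹)
    -- Frenet frame and Frenet equations
    (hTT : ∀ s, dot3 (T s) (T s) = 1)
    (hNN : ∀ s, dot3 (N s) (N s) = 1)
    (hTN : ∀ s, dot3 (T s) (N s) = 0)
    (hB : ∀ s, B s = cross3 (T s) (N s))
    (hα : ∀ s, HasDerivAt α (T s) s)
    (hT : ∀ s, HasDerivAt T (κ s • N s) s)
    (hN : ∀ s, HasDerivAt N ((-κ s) • T s + τ s • B s) s)
    (hB' : ∀ s, HasDerivAt B ((-τ s) • N s) s)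
    (hr' : ∀ s, HasDerivAt r (r' s) s)
    (τ' r'' : ℝ → ℝ)
    (hτ' : ∀ s, HasDerivAt τ (τ' s) s)
    (hr'' : ∀ s, HasDerivAt r' (r'' s) s)
    (κ' : ℝ → ℝ)
    (hκ' : ∀ s, HasDerivAt κ (κ' s) s)
    (hκ'0 : ∀ s, κ' s ≠ 0)
    (hτ0 : ∀ s, τ s ≠ 0)
    (R : ℝ) :
    ((∃ c : Fin 3 → ℝ, ∀ s, dot3 (α s - c) (α s - c) = R ^ 2) ↔
      ∀ s, (r s) ^ 2 + (r' s) ^ 2 / (τ s) ^ 2 = R ^ 2)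
    ∧ ((∀ s, (r s) ^ 2 + (r' s) ^ 2 / (τ s) ^ 2 = R ^ 2) →
        ∀ s, r'' s * τ s - r' s * τ' s + r s * (τ s) ^ 3 = 0) := by
  have hκ0 : ∀ s, κ s ≠ 0 := fun s => (hκ s).ne'
  have hr'0 : ∀ s, r' s ≠ 0 := fun s => by
    have hinv := (hκ' s).inv (hκ0 s)
    rw [show κ⁻¹ = r from funext fun t => (hr t).symm] at hinv
    rw [(hr' s).unique hinv]
    exact div_ne_zero (neg_ne_zero.mpr (hκ'0 s)) (pow_ne_zero 2 (hκ0 s))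
  have hid : (∀ s, r s ^ 2 + r' s ^ 2 / τ s ^ 2 = R ^ 2) →
      ∀ s, r'' s * τ s - r' s * τ' s + r s * τ s ^ 3 = 0 := fun hR s =>
    radius_identity_of_sq_add_sq_div_sq_eq (hr' s) (hr'' s) (hτ' s) (hτ0 s) (hr'0 s) hR
  refine ⟨⟨fun ⟨c, hc⟩ => ?_, fun hR => ?_⟩, hid⟩
  · exact sq_add_sq_div_sq_eq_of_sphere hα hT hN hTT hNN hTN hB hκ0 hr hr' hτ0 hc
  · exact sphere_of_sq_add_sq_div_sq_eq hα hN hB' hTT hNN hTN hB hκ0 hr hr' hr'' hτ' hτ0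
      (hid hR) hR

/-- A unit-speed curve with `τ ≠ 0`, `κ' ≠ 0` lies in a sphere of
radius `R` iff `r² + r'²/τ² = R²`; moreover this condition implies
`r''τ - r'τ' + rτ³ = 0`. -/
theorem stmt_13
    (α T N B : ℝ → Fin 3 → ℝ) (κ τ r r' : ℝ → ℝ)
    (hκ : ∀ s, 0 < κ s)
    (hr : ∀ s, r s = (κ s)⁻¹)
    -- Frenet frame and Frenet equations
    (hTT : ∀ s, dot3 (T s) (T s) = 1)
    (hNN : ∀ s, dot3 (N s) (N s) = 1)
    (hTN : ∀ s, dot3 (T s) (N s) = 0)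
    (hB : ∀ s, B s = cross3 (T s) (N s))
    (hα : ∀ s, HasDerivAt α (T s) s)
    (hT : ∀ s, HasDerivAt T (κ s • N s) s)
    (hN : ∀ s, HasDerivAt N ((-κ s) • T s + τ s • B s) s)
    (hB' : ∀ s, HasDerivAt B ((-τ s) • N s) s)
    (hr' : ∀ s, HasDerivAt r (r' s) s)
    -- the surface of osculating circles and its partial derivatives
    (X Xs Xu : ℝ → ℝ → Fin 3 → ℝ)
    (hX : ∀ s u, X s u = α s + r s • (Real.sin u • T s + (1 - Real.cos u) • N s))
    (hXs : ∀ s u, HasDerivAt (fun t => X t u) (Xs s u) s)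
    (hXu : ∀ s u, HasDerivAt (fun w => X s w) (Xu s u) u)
    (τ' r'' : ℝ → ℝ)
    (hτ' : ∀ s, HasDerivAt τ (τ' s) s)
    (hr'' : ∀ s, HasDerivAt r' (r'' s) s)
    (κ' : ℝ → ℝ)
    (hκ' : ∀ s, HasDerivAt κ (κ' s) s)
    (hκ'0 : ∀ s, κ' s ≠ 0)
    (hτ0 : ∀ s, τ s ≠ 0)
    (R : ℝ) :
    ((∃ c : Fin 3 → ℝ, ∀ s, dot3 (α s - c) (α s - c) = R ^ 2) ↔
      ∀ s, (r s) ^ 2 + (r' s) ^ 2 / (τ s) ^ 2 = R ^ 2)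
    ∧ ((∀ s, (r s) ^ 2 + (r' s) ^ 2 / (τ s) ^ 2 = R ^ 2) →
        ∀ s, r'' s * τ s - r' s * τ' s + r s * (τ s) ^ 3 = 0) :=
  stmt_13_general α T N B κ τ r r' hκ hr hTT hNN hTN hB hα hT hN hB' hr' τ' r'' hτ' hr'' κ' hκ' hκ'0
    hτ0 R
end
end
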